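/- Let Γ be a group and let f : Γ → ℂ be a parallelogram function. Then f is a polynomial function of order at most 3: for all a, b, c, d ∈ Γ, f̂((a−1)(b−1)(c−1)(d−1)) = 0. -/

import Mathlib

section Aux

variable {Γ : Type*} [Group Γ] (f : Γ → ℂ)
variable (hf : ∀ x y : Γ, f (x * y) + f (x * y⁻¹) = 2 * f x + 2 * f y)

include hf

lemma pf_one : f 1 = 0 := by
  have h := hf 1 1
  simp only [mul_one, inv_one] at h
  linear_combination -h / 2

lemma pf_inv (x : Γ) : f x⁻¹ = f x := by
  have h := hf 1 x
  simp only [one_mul] at h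
  linear_combination h + 2 * pf_one f hf

lemma pf_comm (x y : Γ) : f (x * y) = f (y * x) := by
  have key : ∀ u v : Γ, f (u * v⁻¹) = f (v⁻¹ * u) := by
    intro u v
    have I4 := hf u v⁻¹
    simp only [inv_inv] at I4
    have I3 := hf v⁻¹ u
    have hxy : f (v⁻¹ * u⁻¹) = f (u * v) := by
      have h := pf_inv f hf (u * v)
      simpa [mul_inv_rev] using h
    linear_combination I4 - I3 + hxy
  have h := key x y⁻¹
  simpa using h

lemma pf_P (x y z : Γ) :
    f (x * y * z) + f (x * y⁻¹ * z) = 2 * f (x * z) + 2 * f y := by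
  have h1 := pf_comm f hf (x * y) z
  have h2 := pf_comm f hf (x * y⁻¹) z
  have h3 := hf (z * x) y
  have h4 := pf_comm f hf z x
  simp only [mul_assoc] at h1 h2 h3 h4 ⊢
  linear_combination h1 + h2 + h3 + 2 * h4

end Aux

/-- third difference helper -/
noncomputable def Efun {Γ : Type*} [Group Γ] (f : Γ → ℂ) (x y z : Γ) : ℂ :=
  f (x * y * z) - f (x * y) - f (x * z) - f (y * z) + f x + f y + f z

/-- fourth difference helper -/
noncomputable def Dfun {Γ : Type*} [Group Γ] (f : Γ → ℂ) (a b c d : Γ) : ℂ :=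
  Efun f (a * b) c d - Efun f a c d - Efun f b c d

section Aux2

variable {Γ : Type*} [Group Γ] (f : Γ → ℂ)
variable (hf : ∀ x y : Γ, f (x * y) + f (x * y⁻¹) = 2 * f x + 2 * f y)

include hf

lemma E_jensen (x y c d : Γ) :
    Efun f (x * y) c d + Efun f (x * y⁻¹) c d = 2 * Efun f x c d := by
  have h1 := pf_P f hf x y (c * d)
  have h2 := pf_P f hf x y c
  have h3 := pf_P f hf x y d
  have h4 := hf x y
  simp only [Efun, mul_assoc] at *
  linear_combination h1 - h2 - h3 + h4

lemma E_odd (x c d : Γ) : Efun f x⁻¹ c d + Efun f x c d = 0 := by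
  have h1 := pf_P f hf 1 x (c * d)
  have h2 := pf_P f hf 1 x c
  have h3 := pf_P f hf 1 x d
  have h4 := pf_inv f hf x
  simp only [Efun, one_mul, mul_assoc] at *
  linear_combination h1 - h2 - h3 + h4

lemma E_quasi (x y c d : Γ) :
    Efun f (x * y) c d + Efun f (y * x) c d
      = 2 * Efun f x c d + 2 * Efun f y c d := by
  have J1 := E_jensen f hf y⁻¹ x c d
  have J2 := E_jensen f hf x⁻¹ y c d
  have O1 := E_odd f hf (x * y) c d
  have O2 := E_odd f hf (y * x) c d
  have O5 := E_odd f hf (x⁻¹ * y) c d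
  have O3 := E_odd f hf x c d
  have O4 := E_odd f hf y c d
  simp only [mul_inv_rev, inv_inv] at J1 J2 O1 O2 O5
  linear_combination -J1 - J2 + O5 + O1 + O2 - 2 * O3 - 2 * O4

lemma D_anti (a b c d : Γ) : Dfun f a b c d + Dfun f b a c d = 0 := by
  have h := E_quasi f hf a b c d
  simp only [Dfun]
  linear_combination h

lemma D_cyc (a b c d : Γ) : Dfun f a b c d = Dfun f b c d a := by
  have h1 := pf_comm f hf a (b * (c * d))
  have h2 := pf_comm f hf a (b * c)
  have h3 := pf_comm f hf a (b * d)
  have h4 := pf_comm f hf a (c * d)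
  have h5 := pf_comm f hf a b
  have h6 := pf_comm f hf a c
  have h7 := pf_comm f hf a d
  simp only [Dfun, Efun, mul_assoc] at *
  linear_combination h1 - h2 - h3 - h4 + h5 + h6 + h7

lemma D_zero (a b c d : Γ) : Dfun f a b c d = 0 := by
  have h1 := D_cyc f hf a b c d
  have h2 := D_anti f hf b c d a
  have h3 := D_cyc f hf c b d a
  have h4 := D_anti f hf b d a c
  have h5 := D_cyc f hf d b a c
  have h6 := D_anti f hf b a c d
  linear_combination (h1 + h2 - h3 - h4 + h5 + h6) / 2

end Aux2

/-- The linearization of `f : Γ → ℂ` to a linear functional on the group algebra `ℂ[Γ]`. -/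
noncomputable def MonoidAlgebra.lin {Γ : Type*} [Group Γ] (f : Γ → ℂ) :
    MonoidAlgebra ℂ Γ →ₗ[ℂ] ℂ :=
  Finsupp.linearCombination ℂ f ∘ₗ (MonoidAlgebra.coeffLinearEquiv ℂ).toLinearMap

theorem parallelogram_is_cubic {Γ : Type*} [Group Γ] (f : Γ → ℂ)
    (hf : ∀ x y : Γ, f (x * y) + f (x * y⁻¹) = 2 * f x + 2 * f y) :
    ∀ a b c d : Γ,
      MonoidAlgebra.lin f
        ((MonoidAlgebra.of ℂ Γ a - 1) * (MonoidAlgebra.of ℂ Γ b - 1) *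
          (MonoidAlgebra.of ℂ Γ c - 1) * (MonoidAlgebra.of ℂ Γ d - 1)) = 0 := by
  intro a b c d
  have hz := D_zero f hf a b c d
  have h1 := pf_one f hf
  simp only [Dfun, Efun, mul_assoc] at hz
  have key : ∀ x : Γ, MonoidAlgebra.lin f (MonoidAlgebra.single x (1:ℂ)) = f x := by
    intro x
    simp [MonoidAlgebra.lin, MonoidAlgebra.coeffLinearEquiv]
  simp only [MonoidAlgebra.of_apply, MonoidAlgebra.one_def,
    sub_mul, mul_sub, MonoidAlgebra.single_mul_single, one_mul, mul_one,
    map_sub, map_add, mul_assoc, key]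
  linear_combination hz + h1
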